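/- Let q₀ ∈ (0, 1/2) and let δ satisfy 0 < δ ≤ (1/2 − q₀)²/(2·q₀·(1 − q₀)) and δ ≤ log(1/q₀). Let γ* ∈ (q₀, 1] be the unique root of Φ(γ) = δ, where Φ(γ) = γ·log(γ/q₀) + (1 − γ)·log((1 − γ)/(1 − q₀)) (with Φ(1) = log(1/q₀) by the convention 0·log 0 = 0). Then the Cactus approximate solution γ̂ = q₀ + √(2·δ·q₀·(1 − q₀)) satisfies γ̂ ≤ γ*; that is, when the exact solution does not exceed 1/2, the approximation never overestimates the exact solution. -/

import Mathlib

/-!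
On `[q₀, 1 - q₀]` the second derivative `1 / (x (1 - x))` of `Φ` is at most its value
`1 / (q₀ (1 - q₀))` at `q₀`, while `Φ(q₀) = Φ'(q₀) = 0`; integrating twice, `Φ` lies below its
second-order Taylor polynomial there. So if `γ* ≤ 1/2`, then `δ = Φ(γ*) ≤ (γ* - q₀)² / (2 q₀ (1 - q₀))`,
which is `γ̂ ≤ γ*`. If `γ* > 1/2`, the hypothesis on `δ` says exactly `γ̂ ≤ 1/2`.
-/

open Real Set

noncomputable def binaryKL (q x : ℝ) : ℝ :=
  x * log (x / q) + (1 - x) * log ((1 - x) / (1 - q))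

lemma le_of_hasDerivAt_nonneg {f f' : ℝ → ℝ} {a b : ℝ} (hab : a ≤ b)
    (hf : ∀ x ∈ Icc a b, HasDerivAt f (f' x) x) (hf' : ∀ x ∈ Ioo a b, 0 ≤ f' x) :
    f a ≤ f b := by
  refine monotoneOn_of_hasDerivWithinAt_nonneg (convex_Icc a b)
    (fun x hx ↦ (hf x hx).continuousAt.continuousWithinAt) (fun x hx ↦ ?_) (by rwa [interior_Icc])
    (left_mem_Icc.2 hab) (right_mem_Icc.2 hab) hab
  rw [interior_Icc] at hx
  exact (hf x (Ioo_subset_Icc_self hx)).hasDerivWithinAt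

lemma hasDerivAt_log_div_const {c x : ℝ} (hc : c ≠ 0) (hx : x ≠ 0) :
    HasDerivAt (fun t ↦ log (t / c)) (1 / x) x :=
  (((hasDerivAt_id' x).div_const c).log (div_ne_zero hx hc)).congr_deriv (by field_simp)

lemma hasDerivAt_log_one_sub_div_const {c x : ℝ} (hc : c ≠ 1) (hx : x ≠ 1) :
    HasDerivAt (fun t ↦ log ((1 - t) / (1 - c))) (-(1 / (1 - x))) x :=
  ((hasDerivAt_log_div_const (sub_ne_zero.2 hc.symm) (sub_ne_zero.2 hx.symm)).comp x
    ((hasDerivAt_id' x).const_sub 1)).congr_deriv (mul_neg_one _)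

lemma hasDerivAt_binaryKL {q x : ℝ} (hq0 : q ≠ 0) (hq1 : q ≠ 1) (hx0 : x ≠ 0) (hx1 : x ≠ 1) :
    HasDerivAt (binaryKL q) (log (x / q) - log ((1 - x) / (1 - q))) x := by
  have h1x : 1 - x ≠ 0 := sub_ne_zero.2 hx1.symm
  refine ((hasDerivAt_id' x).fun_mul (hasDerivAt_log_div_const hq0 hx0)).fun_add
    (((hasDerivAt_id' x).const_sub 1).fun_mul
      (hasDerivAt_log_one_sub_div_const hq1 hx1)) |>.congr_deriv ?_
  field_simp
  ring

lemma log_div_sub_log_div_le {q x : ℝ} (hq : 0 < q) (hqx : q ≤ x) (hx : x ≤ 1 - q) :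
    log (x / q) - log ((1 - x) / (1 - q)) ≤ (x - q) / (q * (1 - q)) := by
  have h1q : 0 < 1 - q := by linarith
  suffices 0 ≤ (x - q) / (q * (1 - q)) - (log (x / q) - log ((1 - x) / (1 - q))) by linarith
  have key := le_of_hasDerivAt_nonneg
    (f := fun t ↦ (t - q) / (q * (1 - q)) - (log (t / q) - log ((1 - t) / (1 - q))))
    (f' := fun t ↦ 1 / (q * (1 - q)) - (1 / t + 1 / (1 - t))) hqx ?_ ?_
  · simpa [hq.ne', h1q.ne'] using key
  all_goals intro t ht
  · have ht0 : t ≠ 0 := by linarith [ht.1]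
    have ht1 : t ≠ 1 := by linarith [ht.2]
    exact (((hasDerivAt_id' t).sub_const q).div_const _).fun_sub
      ((hasDerivAt_log_div_const hq.ne' ht0).fun_sub
        (hasDerivAt_log_one_sub_div_const (by linarith) ht1)) |>.congr_deriv (by ring)
  · have ht0 : 0 < t := by linarith [ht.1]
    have ht1 : 0 < 1 - t := by linarith [ht.2]
    -- `t (1 - t) - q (1 - q) = (t - q) (1 - q - t)`
    have hprod : q * (1 - q) ≤ t * (1 - t) := by nlinarith [ht.1, ht.2]
    have : 1 / t + 1 / (1 - t) = 1 / (t * (1 - t)) := by field_simp; ring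
    rw [this, sub_nonneg]
    exact one_div_le_one_div_of_le (by positivity) hprod

lemma binaryKL_le_sq_div {q x : ℝ} (hq : 0 < q) (hqx : q ≤ x) (hx : x ≤ 1 - q) :
    binaryKL q x ≤ (x - q) ^ 2 / (2 * q * (1 - q)) := by
  have h1q : 0 < 1 - q := by linarith
  suffices 0 ≤ (x - q) ^ 2 / (2 * q * (1 - q)) - binaryKL q x by linarith
  have key := le_of_hasDerivAt_nonneg
    (f := fun t ↦ (t - q) ^ 2 / (2 * q * (1 - q)) - binaryKL q t)
    (f' := fun t ↦ (t - q) / (q * (1 - q)) - (log (t / q) - log ((1 - t) / (1 - q)))) hqx ?_ ?_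
  · simpa [binaryKL, hq.ne', h1q.ne'] using key
  all_goals intro t ht
  · have ht0 : t ≠ 0 := by linarith [ht.1]
    have ht1 : t ≠ 1 := by linarith [ht.2]
    refine (((hasDerivAt_id' t).sub_const q).pow 2).div_const (2 * q * (1 - q)) |>.fun_sub
      (hasDerivAt_binaryKL hq.ne' (by linarith) ht0 ht1) |>.congr_deriv ?_
    field_simp
    ring
  · exact sub_nonneg.2 (log_div_sub_log_div_le hq ht.1.le (by linarith [ht.2]))

theorem stmt_16_general (q₀ δ : ℝ) (hq₀ : q₀ ∈ Set.Ioo (0 : ℝ) (1 / 2))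
    (hδ1 : δ ≤ (1 / 2 - q₀) ^ 2 / (2 * q₀ * (1 - q₀)))
    (γstar : ℝ) (hmem : γstar ∈ Set.Ioc q₀ 1)
    (hroot : γstar * Real.log (γstar / q₀) +
      (1 - γstar) * Real.log ((1 - γstar) / (1 - q₀)) = δ) :
    q₀ + Real.sqrt (2 * δ * q₀ * (1 - q₀)) ≤ γstar := by
  obtain ⟨hq0, hq2⟩ := hq₀
  have hc : 0 < 2 * q₀ * (1 - q₀) := mul_pos (by positivity) (by linarith)
  have hδm : δ ≤ (min γstar (1 / 2) - q₀) ^ 2 / (2 * q₀ * (1 - q₀)) := by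
    rcases le_total γstar (1 / 2) with h | h
    · rw [min_eq_left h, ← hroot]
      exact binaryKL_le_sq_div hq0 hmem.1.le (by linarith)
    · rwa [min_eq_right h]
  have hsqrt : √(2 * δ * q₀ * (1 - q₀)) ≤ min γstar (1 / 2) - q₀ := by
    rw [Real.sqrt_le_left (sub_nonneg.2 (le_min hmem.1.le hq2.le))]
    rw [le_div_iff₀ hc] at hδm
    linarith
  linarith [min_le_left γstar (1 / 2)]

/-- When the exact root `γ*` of `Φ(γ) = δ` does not exceed `1/2`
(guaranteed by `δ ≤ (1/2 - q₀)²/(2 q₀ (1 - q₀))`), the Cactus approximation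
`γ̂ = q₀ + √(2 δ q₀ (1 - q₀))` never overestimates it: `γ̂ ≤ γ*`. -/
theorem stmt_16 (q₀ δ : ℝ) (hq₀ : q₀ ∈ Set.Ioo (0 : ℝ) (1 / 2))
    (hδ0 : 0 < δ) (hδ1 : δ ≤ (1 / 2 - q₀) ^ 2 / (2 * q₀ * (1 - q₀)))
    (hδ2 : δ ≤ Real.log (1 / q₀))
    (γstar : ℝ) (hmem : γstar ∈ Set.Ioc q₀ 1)
    (hroot : γstar * Real.log (γstar / q₀) +
      (1 - γstar) * Real.log ((1 - γstar) / (1 - q₀)) = δ) :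
    q₀ + Real.sqrt (2 * δ * q₀ * (1 - q₀)) ≤ γstar :=
  stmt_16_general q₀ δ hq₀ hδ1 γstar hmem hroot
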